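/- arXiv:gr-qc/0603103 — 3 statements merged into one kernel-verified Lean document; each statement's English description precedes it below -/
import Mathlib

section
/- Let φ : [R_i, R_o] → ℝ be continuous with 0 < R_i < R_o, and define v(R) = ∫_{R_i}^{R} (1/r⁴)(∫_{R_i}^{r} s³ φ(s) ds) dr. Then the function (δF)_p(R) := v(R)·R satisfies (δF)_p''(R) + (2/R)(δF)_p'(R) - 2(δF)_p(R)/R² = φ(R) for all R in (R_i, R_o). -/
/-!
Writing `F = v R`, the operator `F'' + 2F'/R - 2F/R²` becomes `v'' R + 4 v' = R⁻³ (R⁴ v')'`, so it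
suffices that `R⁴ v'` is a primitive of `R³ φ`; both primitives are supplied by the fundamental
theorem of calculus.
-/

open MeasureTheory intervalIntegral Set Filter Topology

section Primitive

variable {E : Type*} [NormedAddCommGroup E] [NormedSpace ℝ E] {f : ℝ → E} {a b x : ℝ}

theorem ContinuousOn.continuousOn_primitive (hf : ContinuousOn f (Icc a b)) (hab : a ≤ b) :
    ContinuousOn (fun u => ∫ t in a..u, f t) (Icc a b) := by
  simpa [uIcc_of_le hab] using
    continuousOn_primitive_interval' (hf.intervalIntegrable_of_Icc hab) left_mem_uIcc

theorem ContinuousOn.hasDerivAt_primitive [CompleteSpace E] (hf : ContinuousOn f (Icc a b))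
    (hx : x ∈ Ioo a b) : HasDerivAt (fun u => ∫ t in a..u, f t) (f x) x := by
  have hnhds : Icc a b ∈ 𝓝 x := Icc_mem_nhds hx.1 hx.2
  exact integral_hasDerivAt_right
    ((hf.mono (Icc_subset_Icc le_rfl hx.2.le)).intervalIntegrable_of_Icc hx.1.le)
    ⟨Icc a b, hnhds, hf.aestronglyMeasurable measurableSet_Icc⟩ (hf.continuousAt hnhds)

end Primitive

section ShellOperator

noncomputable def shellOperator (F : ℝ → ℝ) (R : ℝ) : ℝ :=
  deriv (deriv F) R + 2 / R * deriv F R - 2 * F R / R ^ 2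

variable {v v' : ℝ → ℝ} {R : ℝ}

theorem shellOperator_mul_id {w : ℝ} (hR : R ≠ 0) (hv : ∀ᶠ u in 𝓝 R, HasDerivAt v (v' u) u)
    (hv' : HasDerivAt v' w R) :
    shellOperator (fun u => v u * u) R = w * R + 4 * v' R := by
  have hF : ∀ᶠ u in 𝓝 R, HasDerivAt (fun u => v u * u) (v' u * u + v u) u :=
    hv.mono fun u hu => by simpa using hu.fun_mul (hasDerivAt_id u)
  have hF' : HasDerivAt (fun u => v' u * u + v u) (w * R + v' R + v' R) R := by
    simpa using (hv'.fun_mul (hasDerivAt_id R)).fun_add hv.self_of_nhds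
  have hderiv : deriv (fun u => v u * u) =ᶠ[𝓝 R] fun u => v' u * u + v u :=
    hF.mono fun u hu => hu.deriv
  rw [shellOperator, hderiv.deriv_eq, hF'.deriv, hF.self_of_nhds.deriv]
  field_simp
  ring

theorem shellOperator_mul_id_of_hasDerivAt {g φ : ℝ → ℝ} (hR : R ≠ 0)
    (hv : ∀ᶠ u in 𝓝 R, HasDerivAt v (1 / u ^ 4 * g u) u) (hg : HasDerivAt g (R ^ 3 * φ R) R) :
    shellOperator (fun u => v u * u) R = φ R := by
  have hinv : HasDerivAt (fun u : ℝ => 1 / u ^ 4) (-(4 * R ^ 3) / (R ^ 4) ^ 2) R := by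
    simpa using (hasDerivAt_pow 4 R).fun_inv (pow_ne_zero 4 hR)
  rw [shellOperator_mul_id hR hv (hinv.fun_mul hg)]
  field_simp
  ring

end ShellOperator

theorem stmt3_general (Ri Ro : ℝ) (hRi : 0 < Ri)
    (φ : ℝ → ℝ) (hφ : ContinuousOn φ (Set.Icc Ri Ro)) :
    ∀ R ∈ Set.Ioo Ri Ro,
      deriv (deriv (fun u : ℝ =>
          (∫ r in Ri..u, (1/r^4) * ∫ s in Ri..r, s^3 * φ s) * u)) R
        + (2/R) * deriv (fun u : ℝ =>
          (∫ r in Ri..u, (1/r^4) * ∫ s in Ri..r, s^3 * φ s) * u) R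
        - 2 * ((∫ r in Ri..R, (1/r^4) * ∫ s in Ri..r, s^3 * φ s) * R) / R^2
      = φ R := by
  intro R hR
  have hf : ContinuousOn (fun s => s ^ 3 * φ s) (Icc Ri Ro) := (continuousOn_pow 3).mul hφ
  have hg := hf.continuousOn_primitive (hR.1.trans hR.2).le
  have hh : ContinuousOn (fun r => 1 / r ^ 4 * ∫ s in Ri..r, s ^ 3 * φ s) (Icc Ri Ro) :=
    (continuousOn_const.div (continuousOn_pow 4)
      fun r hr => pow_ne_zero 4 (hRi.trans_le hr.1).ne').mul hg
  have hv : ∀ᶠ u in 𝓝 R, HasDerivAt (fun u => ∫ r in Ri..u, 1 / r ^ 4 * ∫ s in Ri..r, s ^ 3 * φ s)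
      (1 / u ^ 4 * ∫ s in Ri..u, s ^ 3 * φ s) u :=
    eventually_of_mem (isOpen_Ioo.mem_nhds hR) fun u hu => hh.hasDerivAt_primitive hu
  exact shellOperator_mul_id_of_hasDerivAt (hRi.trans hR.1).ne' hv (hf.hasDerivAt_primitive hR)

theorem stmt3 (Ri Ro : ℝ) (hRi : 0 < Ri) (hRo : Ri < Ro)
    (φ : ℝ → ℝ) (hφ : ContinuousOn φ (Set.Icc Ri Ro)) :
    ∀ R ∈ Set.Ioo Ri Ro,
      deriv (deriv (fun u : ℝ =>
          (∫ r in Ri..u, (1/r^4) * ∫ s in Ri..r, s^3 * φ s) * u)) R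
        + (2/R) * deriv (fun u : ℝ =>
          (∫ r in Ri..u, (1/r^4) * ∫ s in Ri..r, s^3 * φ s) * u) R
        - 2 * ((∫ r in Ri..R, (1/r^4) * ∫ s in Ri..r, s^3 * φ s) * R) / R^2
      = φ R :=
  stmt3_general Ri Ro hRi φ hφ
end

section
/- Let λ = 0, μ > 0, G > 0, ρ₀ > 0, R_o > 0, and b ∈ (0,1) with R_i = bR_o. The linearized radial strain H(R) = δF'(R) = (G4πρ₀²/(3·2μ))(3R²/10 + ū₁ - 2ū₂R⁻³) (with ū₁, ū₂ as in the ideal cork case) satisfies H(R_i) = (2Gπρ₀²R_o²/(5μ))·(b²-1)/(1-b³) < 0 and H(R_o) = (2Gπρ₀²R_o²/(5μ))·b³(b²-1)/(1-b³) < 0. -/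
theorem stmt9 (mu G ρ₀ Ro b : ℝ) (hmu : 0 < mu) (hG : 0 < G) (hρ : 0 < ρ₀)
    (hRo : 0 < Ro) (hb : b ∈ Set.Ioo (0:ℝ) 1) :
    let Ri := b * Ro
    let u1 := -(3/10)*Ro^2*(1-b^5)/(1-b^3)
    let u2 := (3/20)*Ro^5*b^3*(1-b^2)/(1-b^3)
    let H : ℝ → ℝ := fun R =>
      (G*4*Real.pi*ρ₀^2/(3*(2*mu))) * (3*R^2/10 + u1 - 2*u2/R^3)
    (H Ri = (2*G*Real.pi*ρ₀^2*Ro^2/(5*mu)) * ((b^2-1)/(1-b^3)) ∧ H Ri < 0) ∧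
    (H Ro = (2*G*Real.pi*ρ₀^2*Ro^2/(5*mu)) * (b^3*(b^2-1)/(1-b^3)) ∧ H Ro < 0) := by
  obtain ⟨hb0, hb1⟩ := hb
  intro Ri u1 u2 H
  have hb3 : (0:ℝ) < 1 - b^3 := by nlinarith [pow_lt_one₀ (le_of_lt hb0) hb1 (by norm_num : 3 ≠ 0)]
  have hb3' : (1:ℝ) - b^3 ≠ 0 := ne_of_gt hb3
  have hbne : b ≠ 0 := ne_of_gt hb0
  have hRone : Ro ≠ 0 := ne_of_gt hRo
  have hmune : mu ≠ 0 := ne_of_gt hmu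
  have hpi : (0:ℝ) < Real.pi := Real.pi_pos
  have hC : (0:ℝ) < 2*G*Real.pi*ρ₀^2*Ro^2/(5*mu) := by positivity
  have hneg1 : (b^2-1)/(1-b^3) < 0 := by
    apply div_neg_of_neg_of_pos _ hb3
    nlinarith
  have hneg2 : b^3*(b^2-1)/(1-b^3) < 0 := by
    rw [mul_div_assoc]
    exact mul_neg_of_pos_of_neg (by positivity) hneg1
  have e1 : H Ri = (2*G*Real.pi*ρ₀^2*Ro^2/(5*mu)) * ((b^2-1)/(1-b^3)) := by
    simp only [H, Ri, u1, u2]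
    field_simp
    ring
  have e2 : H Ro = (2*G*Real.pi*ρ₀^2*Ro^2/(5*mu)) * (b^3*(b^2-1)/(1-b^3)) := by
    simp only [H, u1, u2]
    field_simp
    ring
  exact ⟨⟨e1, e1 ▸ mul_neg_of_pos_of_neg hC hneg1⟩,
    ⟨e2, e2 ▸ mul_neg_of_pos_of_neg hC hneg2⟩⟩
end

section
/- Let λ = 0, μ > 0, G > 0, ρ₀ > 0, R_o > 0, b ∈ (0,1), R_i = bR_o. The linearized strain H(R) = (G4πρ₀²/(6μ))(3R²/10 + ū₁ - 2ū₂R⁻³), with ū₁ = -(3/10)R_o²(1-b⁵)/(1-b³) < 0 and ū₂ = (3/20)R_o⁵b³(1-b²)/(1-b³) > 0, satisfies H(R) < 0 for all R ∈ [R_i, R_o]. That is, the ideal cork shell is compressed throughout. -/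
lemma stmt10_key (b Ro R : ℝ) (hb0 : 0 < b) (hb1 : b < 1) (hRo : 0 < Ro)
    (h1 : b * Ro ≤ R) (h2 : R ≤ Ro) :
    R^5*(1-b^3) - Ro^2*(1-b^5)*R^3 - Ro^5*b^3*(1-b^2) < 0 := by
  have hR : 0 < R := lt_of_lt_of_le (by positivity) h1
  have hQ : 0 ≤ (1-b^3)*R^3 + (1+b)*(1-b^3)*R^2*Ro + b*(1+b)*(1-b^2)*R*Ro^2
      + b^2*(1-b^2)*Ro^3 := by
    have h3 : 0 < 1 - b^3 := by nlinarith [pow_lt_one₀ hb0.le hb1 three_ne_zero]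
    have h4 : 0 < 1 - b^2 := by nlinarith [pow_lt_one₀ hb0.le hb1 two_ne_zero]
    positivity
  have hprod : 0 ≤ (R - b*Ro) * (Ro - R) := mul_nonneg (by linarith) (by linarith)
  have hneg : 0 < Ro^5 * b^3 * (1 - b^2) := by
    have h4 : 0 < 1 - b^2 := by nlinarith [pow_lt_one₀ hb0.le hb1 two_ne_zero]
    positivity
  nlinarith [mul_nonneg hprod hQ]

theorem stmt10 (mu G ρ₀ Ro b : ℝ) (hmu : 0 < mu) (hG : 0 < G) (hρ : 0 < ρ₀)
    (hRo : 0 < Ro) (hb : b ∈ Set.Ioo (0:ℝ) 1) :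
    let Ri := b * Ro
    let u1 := -(3/10)*Ro^2*(1-b^5)/(1-b^3)
    let u2 := (3/20)*Ro^5*b^3*(1-b^2)/(1-b^3)
    let H : ℝ → ℝ := fun R =>
      (G*4*Real.pi*ρ₀^2/(6*mu)) * (3*R^2/10 + u1 - 2*u2/R^3)
    ∀ R ∈ Set.Icc Ri Ro, H R < 0 := by
  intro Ri u1 u2 H R hR
  obtain ⟨hb0, hb1⟩ := hb
  obtain ⟨h1, h2⟩ := hR
  have hRpos : 0 < R := lt_of_lt_of_le (by positivity) h1
  have hb3 : 0 < 1 - b^3 := by nlinarith [pow_lt_one₀ hb0.le hb1 three_ne_zero]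
  have hc : 0 < G*4*Real.pi*ρ₀^2/(6*mu) := by
    have := Real.pi_pos; positivity
  have hden : 0 < (1-b^3) * R^3 := by positivity
  have hE : (3*R^2/10 + u1 - 2*u2/R^3) * ((1-b^3)*R^3)
      = (3/10) * (R^5*(1-b^3) - Ro^2*(1-b^5)*R^3 - Ro^5*b^3*(1-b^2)) := by
    show (3*R^2/10 + -(3/10)*Ro^2*(1-b^5)/(1-b^3)
        - 2*((3/20)*Ro^5*b^3*(1-b^2)/(1-b^3))/R^3) * ((1-b^3)*R^3) = _
    field_simp
    ring
  have hkey := stmt10_key b Ro R hb0 hb1 hRo h1 h2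
  have hEneg : 3*R^2/10 + u1 - 2*u2/R^3 < 0 := by
    nlinarith [mul_pos hden (neg_pos.mpr (show 3*R^2/10 + u1 - 2*u2/R^3 < 0 from by nlinarith))]
  exact mul_neg_of_pos_of_neg hc hEneg
end
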